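/- For every finite simple graph G, a^*(G^{×2}) = a^*(G), where a^*(K) = a(K) if a(K) ≤ 1/2 and a^*(K) = 1 if a(K) > 1/2, with a(K) = max{|U|/(|U| + |N_K(U)|) : U a nonempty independent set of K}. -/

import Mathlib

open scoped Classical
open Filter

/-- Categorical (tensor) product of two simple graphs. -/
def tensorProd {α β : Type*} (G : SimpleGraph α) (H : SimpleGraph β) :
    SimpleGraph (α × β) where
  Adj p q := G.Adj p.1 q.1 ∧ H.Adj p.2 q.2
  symm := ⟨fun p q h => ⟨h.1.symm, h.2.symm⟩⟩
  loopless := ⟨fun p h => G.ne_of_adj h.1 rfl⟩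

/-- A finset is independent. -/
def IsIndep {α : Type*} (G : SimpleGraph α) (U : Finset α) : Prop :=
  ∀ u ∈ U, ∀ v ∈ U, ¬ G.Adj u v

/-- Neighborhood of a finset. -/
noncomputable def nbhd {α : Type*} [Fintype α] (G : SimpleGraph α) (U : Finset α) : Finset α :=
  Finset.univ.filter (fun v => ∃ u ∈ U, G.Adj u v)

/-- Independence number. -/
noncomputable def alphaNum {α : Type*} [Fintype α] (G : SimpleGraph α) : ℕ :=
  sSup {n : ℕ | ∃ U : Finset α, IsIndep G U ∧ U.card = n}

/-- Independence ratio. -/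
noncomputable def iRatio {α : Type*} [Fintype α] (G : SimpleGraph α) : ℝ :=
  (alphaNum G : ℝ) / (Fintype.card α : ℝ)

/-- a(G): the maximum of |U|/(|U|+|N(U)|) over nonempty independent sets. -/
noncomputable def aRatio {α : Type*} [Fintype α] (G : SimpleGraph α) : ℝ :=
  sSup {r : ℝ | ∃ U : Finset α, U.Nonempty ∧ IsIndep G U ∧
    r = (U.card : ℝ) / ((U.card : ℝ) + ((nbhd G U).card : ℝ))}

/-- b(G): the minimum of |N(U)|/|U| over nonempty independent sets. -/
noncomputable def bRatio {α : Type*} [Fintype α] (G : SimpleGraph α) : ℝ :=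
  sInf {r : ℝ | ∃ U : Finset α, U.Nonempty ∧ IsIndep G U ∧
    r = ((nbhd G U).card : ℝ) / (U.card : ℝ)}

/-- a*(G). -/
noncomputable def aStar {α : Type*} [Fintype α] (G : SimpleGraph α) : ℝ :=
  if aRatio G ≤ 1/2 then aRatio G else 1

/-- k-th categorical power of G. -/
def tensorPow {α : Type*} (G : SimpleGraph α) (k : ℕ) : SimpleGraph (Fin k → α) where
  Adj x y := x ≠ y ∧ ∀ i, G.Adj (x i) (y i)
  symm := ⟨fun x y h => ⟨h.1.symm, fun i => (h.2 i).symm⟩⟩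
  loopless := ⟨fun x h => h.1 rfl⟩

/-- Disjoint union of two simple graphs. -/
def disjUnion {α β : Type*} (G : SimpleGraph α) (H : SimpleGraph β) :
    SimpleGraph (α ⊕ β) where
  Adj p q := match p, q with
    | Sum.inl a, Sum.inl b => G.Adj a b
    | Sum.inr a, Sum.inr b => H.Adj a b
    | _, _ => False
  symm := ⟨by rintro (a|a) (b|b) h <;> simp_all <;> exact h.symm⟩
  loopless := ⟨by rintro (a|a) h <;> simp_all⟩


/-! Write `a = a(G)`; for `c ≥ 0`, `a(G) ≤ c` says that `(1 - c)|U| ≤ c|N(U)|` for every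
independent `U`. If `U` is independent in `G`, so is `U × V` in `G × G`, with neighbourhood
`N(U) × N(V)`; taking `V` to be all of `V(G)` gives `a(G × G) ≥ a(G)`, which settles `a > 1/2`.

For `a ≤ 1/2`, applying the bound to the independent set `R \ N(R)`, whose neighbourhood lies in
`N(R) \ R`, gives `a|R| + (1 - 2a)|R \ N(R)| ≤ a|N(R)|` for every `R`. Let `U` be independent in
`G × G` and `P` the set of pairs `(x, b)` with `x ∈ N(R_b)`, where `R_b` is the row of `U` at `b`.
Summing the inequality over the rows of `U` gives `a|U| + (1 - 2a)|U \ P| ≤ a|P|`. The columns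
of `N(U)` are the neighbourhoods of the columns of `P`, and independence of `U` makes the columns
of `U ∩ P` avoid them; summing over the columns of `P` gives `a|P| + (1 - 2a)|U ∩ P| ≤ a|N(U)|`.
Adding up, `(1 - a)|U| ≤ a|N(U)|`. -/

open Finset

section Ratio

variable {α : Type*} [Fintype α]

/-- The inequality `|U| / (|U| + |N(U)|) ≤ c` cleared of denominators, hence also meaningful
for `U = ∅`. -/
def HasIndepExpansion (G : SimpleGraph α) (c : ℝ) : Prop :=
  ∀ U : Finset α, IsIndep G U → (1 - c) * #U ≤ c * #(nbhd G U)

lemma div_add_le_iff_one_sub_mul_le {k m c : ℝ} (hk : 0 < k) (hm : 0 ≤ m) :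
    k / (k + m) ≤ c ↔ (1 - c) * k ≤ c * m := by
  rw [div_le_iff₀ (by positivity)]
  constructor <;> intro h <;> linarith

lemma aRatio_nonneg (G : SimpleGraph α) : 0 ≤ aRatio G :=
  Real.sSup_nonneg <| by rintro _ ⟨U, -, -, rfl⟩; positivity

lemma div_le_aRatio {G : SimpleGraph α} {U : Finset α} (hne : U.Nonempty) (hU : IsIndep G U) :
    (#U : ℝ) / (#U + #(nbhd G U)) ≤ aRatio G := by
  refine le_csSup (Set.Finite.bddAbove ?_) ⟨U, hne, hU, rfl⟩
  exact (Set.finite_range fun U : Finset α => (#U : ℝ) / (#U + #(nbhd G U))).subset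
    (by rintro _ ⟨U, -, -, rfl⟩; exact ⟨U, rfl⟩)

lemma aRatio_le_iff {G : SimpleGraph α} {c : ℝ} (hc : 0 ≤ c) :
    aRatio G ≤ c ↔ HasIndepExpansion G c := by
  have ratio_le_iff {U : Finset α} (hU : U.Nonempty) :
      (#U : ℝ) / (#U + #(nbhd G U)) ≤ c ↔ (1 - c) * #U ≤ c * #(nbhd G U) :=
    div_add_le_iff_one_sub_mul_le (by exact_mod_cast hU.card_pos) (by positivity)
  constructor
  · intro h U hU
    rcases U.eq_empty_or_nonempty with rfl | hne
    · simpa using mul_nonneg hc (Nat.cast_nonneg _)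
    · exact (ratio_le_iff hne).1 ((div_le_aRatio hne hU).trans h)
  · intro h
    exact Real.sSup_le (by rintro _ ⟨U, hne, hU, rfl⟩; exact (ratio_le_iff hne).2 (h U hU)) hc

end Ratio

section Nbhd

variable {α : Type*} [Fintype α] {G : SimpleGraph α}

lemma mem_nbhd {U : Finset α} {v : α} : v ∈ nbhd G U ↔ ∃ u ∈ U, G.Adj u v := by
  simp [nbhd]

lemma isIndep_sdiff_nbhd (R : Finset α) : IsIndep G (R \ nbhd G R) := by
  intro u hu v hv huv
  exact (mem_sdiff.1 hu).2 (mem_nbhd.2 ⟨v, (mem_sdiff.1 hv).1, huv.symm⟩)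

lemma nbhd_sdiff_nbhd_subset (R : Finset α) : nbhd G (R \ nbhd G R) ⊆ nbhd G R \ R := by
  intro z hz
  obtain ⟨u, hu, huz⟩ := mem_nbhd.1 hz
  obtain ⟨huR, huN⟩ := mem_sdiff.1 hu
  exact mem_sdiff.2 ⟨mem_nbhd.2 ⟨u, huR, huz⟩, fun hzR => huN (mem_nbhd.2 ⟨z, hzR, huz.symm⟩)⟩

lemma HasIndepExpansion.mul_card_add_le {c : ℝ} (hG : HasIndepExpansion G c) (hc : 0 ≤ c)
    (R : Finset α) :
    c * #R + (1 - 2 * c) * #(R \ nbhd G R) ≤ c * #(nbhd G R) := by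
  have hI := hG _ (isIndep_sdiff_nbhd R)
  have hN : (#(nbhd G (R \ nbhd G R)) : ℝ) ≤ #(nbhd G R \ R) := by
    exact_mod_cast card_le_card (nbhd_sdiff_nbhd_subset R)
  have hR : (#(R \ nbhd G R) : ℝ) + #(R ∩ nbhd G R) = #R := by
    exact_mod_cast card_sdiff_add_card_inter R (nbhd G R)
  have hNR : (#(nbhd G R \ R) : ℝ) + #(nbhd G R ∩ R) = #(nbhd G R) := by
    exact_mod_cast card_sdiff_add_card_inter (nbhd G R) R
  rw [inter_comm] at hNR
  linear_combination hI + mul_le_mul_of_nonneg_left hN hc - c * hR + c * hNR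

end Nbhd

section Fiber

variable {α β : Type*}

noncomputable def rowFiber [Fintype α] (S : Finset (α × β)) (b : β) : Finset α :=
  {x | (x, b) ∈ S}

noncomputable def colFiber [Fintype β] (S : Finset (α × β)) (x : α) : Finset β :=
  {b | (x, b) ∈ S}

@[simp]
lemma mem_rowFiber [Fintype α] {S : Finset (α × β)} {b : β} {x : α} : x ∈ rowFiber S b ↔ (x, b) ∈ S := by
  simp [rowFiber]

@[simp]
lemma mem_colFiber [Fintype β] {S : Finset (α × β)} {x : α} {b : β} : b ∈ colFiber S x ↔ (x, b) ∈ S := by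
  simp [colFiber]

variable [Fintype α] [Fintype β]

lemma card_eq_sum_card_colFiber (S : Finset (α × β)) : #S = ∑ x, #(colFiber S x) := by
  simp only [colFiber, card_filter]
  rw [← Fintype.sum_prod_type' (f := fun x b => if (x, b) ∈ S then 1 else 0)]
  simp

lemma card_eq_sum_card_rowFiber (S : Finset (α × β)) : #S = ∑ b, #(rowFiber S b) := by
  simp only [rowFiber, card_filter]
  rw [← Fintype.sum_prod_type_right' (f := fun x b => if (x, b) ∈ S then 1 else 0)]
  simp

end Fiber

lemma IsIndep.product {α β : Type*} {G : SimpleGraph α} {U : Finset α} (hU : IsIndep G U)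
    (H : SimpleGraph β) (V : Finset β) : IsIndep (tensorProd G H) (U ×ˢ V) :=
  fun _ hp _ hq hpq => hU _ (mem_product.1 hp).1 _ (mem_product.1 hq).1 hpq.1

section TensorProd

variable {α β : Type*} [Fintype α] [Fintype β] {G : SimpleGraph α} {H : SimpleGraph β}

noncomputable def nbhdRows (G : SimpleGraph α) (U : Finset (α × β)) : Finset (α × β) :=
  {p | p.1 ∈ nbhd G (rowFiber U p.2)}

@[simp]
lemma mem_nbhdRows {U : Finset (α × β)} {p : α × β} :
    p ∈ nbhdRows G U ↔ p.1 ∈ nbhd G (rowFiber U p.2) := by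
  simp [nbhdRows]

lemma rowFiber_nbhdRows (U : Finset (α × β)) (b : β) :
    rowFiber (nbhdRows G U) b = nbhd G (rowFiber U b) := by
  ext x; simp

lemma rowFiber_sdiff_nbhdRows (U : Finset (α × β)) (b : β) :
    rowFiber (U \ nbhdRows G U) b = rowFiber U b \ nbhd G (rowFiber U b) := by
  ext x; simp

lemma colFiber_nbhd_tensorProd (U : Finset (α × β)) (x : α) :
    colFiber (nbhd (tensorProd G H) U) x = nbhd H (colFiber (nbhdRows G U) x) := by
  ext c
  simp only [mem_colFiber, mem_nbhdRows, mem_rowFiber, mem_nbhd, tensorProd, Prod.exists]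
  constructor
  · rintro ⟨x', b, hU, hx, hb⟩
    exact ⟨b, ⟨x', hU, hx⟩, hb⟩
  · rintro ⟨b, ⟨x', hU, hx⟩, hb⟩
    exact ⟨x', b, hU, hx, hb⟩

lemma colFiber_inter_nbhdRows_subset {U : Finset (α × β)} (hU : IsIndep (tensorProd G H) U)
    (x : α) :
    colFiber (U ∩ nbhdRows G U) x
      ⊆ colFiber (nbhdRows G U) x \ nbhd H (colFiber (nbhdRows G U) x) := by
  intro b hb
  obtain ⟨hxbU, hxbN⟩ := mem_inter.1 (mem_colFiber.1 hb)
  refine mem_sdiff.2 ⟨mem_colFiber.2 hxbN, fun hbN => ?_⟩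
  obtain ⟨b', hb', hbb'⟩ := mem_nbhd.1 hbN
  obtain ⟨x', hx', hxx'⟩ := mem_nbhd.1 (mem_nbhdRows.1 (mem_colFiber.1 hb'))
  exact hU _ (mem_rowFiber.1 hx') _ hxbU ⟨hxx', hbb'⟩

lemma HasIndepExpansion.mul_card_add_le_nbhdRows {c : ℝ} (hG : HasIndepExpansion G c)
    (hc : 0 ≤ c) (U : Finset (α × β)) :
    c * #U + (1 - 2 * c) * #(U \ nbhdRows G U) ≤ c * #(nbhdRows G U) := by
  calc c * #U + (1 - 2 * c) * #(U \ nbhdRows G U)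
      = ∑ b, (c * #(rowFiber U b) + (1 - 2 * c) * #(rowFiber (U \ nbhdRows G U) b)) := by
        rw [card_eq_sum_card_rowFiber U, card_eq_sum_card_rowFiber (U \ nbhdRows G U)]
        push_cast
        rw [sum_add_distrib, mul_sum, mul_sum]
    _ ≤ ∑ b, c * #(rowFiber (nbhdRows G U) b) := sum_le_sum fun b _ => by
        rw [rowFiber_sdiff_nbhdRows, rowFiber_nbhdRows]
        exact hG.mul_card_add_le hc _
    _ = c * #(nbhdRows G U) := by
        rw [card_eq_sum_card_rowFiber (nbhdRows G U)]
        push_cast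
        rw [mul_sum]

lemma HasIndepExpansion.mul_card_nbhdRows_add_le {c : ℝ} (hH : HasIndepExpansion H c)
    (hc : 0 ≤ c) (hc' : c ≤ 1 / 2) {U : Finset (α × β)} (hU : IsIndep (tensorProd G H) U) :
    c * #(nbhdRows G U) + (1 - 2 * c) * #(U ∩ nbhdRows G U)
      ≤ c * #(nbhd (tensorProd G H) U) := by
  calc c * #(nbhdRows G U) + (1 - 2 * c) * #(U ∩ nbhdRows G U)
      = ∑ x, (c * #(colFiber (nbhdRows G U) x)
          + (1 - 2 * c) * #(colFiber (U ∩ nbhdRows G U) x)) := by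
        rw [card_eq_sum_card_colFiber (nbhdRows G U), card_eq_sum_card_colFiber (U ∩ nbhdRows G U)]
        push_cast
        rw [sum_add_distrib, mul_sum, mul_sum]
    _ ≤ ∑ x, c * #(colFiber (nbhd (tensorProd G H) U) x) := sum_le_sum fun x _ => by
        have hT : (#(colFiber (U ∩ nbhdRows G U) x) : ℝ)
            ≤ #(colFiber (nbhdRows G U) x \ nbhd H (colFiber (nbhdRows G U) x)) := by
          exact_mod_cast card_le_card (colFiber_inter_nbhdRows_subset hU x)
        rw [colFiber_nbhd_tensorProd]
        linarith [hH.mul_card_add_le hc (colFiber (nbhdRows G U) x),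
          mul_le_mul_of_nonneg_left hT (by linarith : (0 : ℝ) ≤ 1 - 2 * c)]
    _ = c * #(nbhd (tensorProd G H) U) := by
        rw [card_eq_sum_card_colFiber (nbhd (tensorProd G H) U)]
        push_cast
        rw [mul_sum]

theorem HasIndepExpansion.tensorProd {c : ℝ} (hG : HasIndepExpansion G c)
    (hH : HasIndepExpansion H c) (hc : 0 ≤ c) (hc' : c ≤ 1 / 2) :
    HasIndepExpansion (tensorProd G H) c := by
  intro U hU
  have hsplit : (#(U \ nbhdRows G U) : ℝ) + #(U ∩ nbhdRows G U) = #U := by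
    exact_mod_cast card_sdiff_add_card_inter U (nbhdRows G U)
  linear_combination hG.mul_card_add_le_nbhdRows hc U + hH.mul_card_nbhdRows_add_le hc hc' hU
    - (1 - 2 * c) * hsplit

lemma nbhd_tensorProd_product (U : Finset α) (V : Finset β) :
    nbhd (tensorProd G H) (U ×ˢ V) = nbhd G U ×ˢ nbhd H V := by
  ext ⟨y, c⟩
  simp only [mem_nbhd, mem_product, tensorProd, Prod.exists]
  constructor
  · rintro ⟨x, b, ⟨hx, hb⟩, hxy, hbc⟩
    exact ⟨⟨x, hx, hxy⟩, ⟨b, hb, hbc⟩⟩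
  · rintro ⟨⟨x, hx, hxy⟩, ⟨b, hb, hbc⟩⟩
    exact ⟨x, b, ⟨hx, hb⟩, hxy, hbc⟩

lemma aRatio_le_aRatio_tensorProd [Nonempty β] (G : SimpleGraph α) (H : SimpleGraph β) :
    aRatio G ≤ aRatio (tensorProd G H) := by
  set c := aRatio (tensorProd G H)
  have hc : 0 ≤ c := aRatio_nonneg _
  rw [aRatio_le_iff hc]
  intro U hU
  have h := (aRatio_le_iff hc).1 le_rfl (U ×ˢ univ) (hU.product H univ)
  rw [nbhd_tensorProd_product, card_product, card_product, card_univ] at h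
  push_cast at h
  have hN : (#(nbhd H univ) : ℝ) ≤ Fintype.card β := by exact_mod_cast card_le_univ _
  have hn : (0 : ℝ) < Fintype.card β := by exact_mod_cast Fintype.card_pos
  refine le_of_mul_le_mul_right ?_ hn
  calc (1 - c) * #U * Fintype.card β = (1 - c) * (#U * Fintype.card β) := by ring
    _ ≤ c * (#(nbhd G U) * #(nbhd H univ)) := h
    _ ≤ c * (#(nbhd G U) * Fintype.card β) := by gcongr
    _ = c * #(nbhd G U) * Fintype.card β := by ring

lemma aRatio_tensorProd_le {c : ℝ} (hG : aRatio G ≤ c) (hH : aRatio H ≤ c) (hc : c ≤ 1 / 2) :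
    aRatio (tensorProd G H) ≤ c := by
  have hc₀ : 0 ≤ c := (aRatio_nonneg G).trans hG
  rw [aRatio_le_iff hc₀] at hG hH ⊢
  exact hG.tensorProd hH hc₀ hc

end TensorProd

theorem stmt7 {α : Type*} [Fintype α] [Nonempty α] (G : SimpleGraph α) :
    aStar (tensorProd G G) = aStar G := by
  have hle : aRatio G ≤ aRatio (tensorProd G G) := aRatio_le_aRatio_tensorProd G G
  unfold aStar
  by_cases h : aRatio G ≤ 1 / 2
  · rw [le_antisymm (aRatio_tensorProd_le le_rfl le_rfl h) hle]
  · rw [if_neg h, if_neg fun h' => h (hle.trans h')]
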